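/- Let f be a tropical polynomial in n variables. Then the corner locus Z(f) ⊆ ℝⁿ is additive (closed under coordinatewise maximum) if and only if there exists a simple tropical polynomial g in n variables with Z(g) = Z(f). -/

import Mathlib

/-- A tropical polynomial in `n` variables: a finite nonempty set of exponent
vectors in `ℕⁿ` together with real coefficients. -/
structure TropPoly (n : ℕ) where
  supp : Finset (Fin n → ℕ)
  supp_nonempty : supp.Nonempty
  coeff : (Fin n → ℕ) → ℝ

namespace TropPoly

variable {n : ℕ}

/-- The value at `u` of the monomial of exponent `ω`. -/
def mono (f : TropPoly n) (ω : Fin n → ℕ) (u : Fin n → ℝ) : ℝ :=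
  (∑ i, (ω i : ℝ) * u i) + f.coeff ω

/-- The piecewise-linear convex function defined by a tropical polynomial:
`f(u) = max_{ω ∈ Ω} (⟨ω, u⟩ + A(ω))`. -/
def eval (f : TropPoly n) (u : Fin n → ℝ) : ℝ :=
  f.supp.sup' f.supp_nonempty (fun ω => f.mono ω u)

/-- The corner locus of a tropical polynomial: the set of points where the
maximum is attained by at least two distinct exponent vectors. -/
def Z (f : TropPoly n) : Set (Fin n → ℝ) :=
  {u | ∃ ω ∈ f.supp, ∃ τ ∈ f.supp, ω ≠ τ ∧
    f.mono ω u = f.eval u ∧ f.mono τ u = f.eval u}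

/-- A tropical polynomial is simple if every exponent vector has at most one
nonzero coordinate (i.e., all monomials are univariate or constant). -/
def Simple (f : TropPoly n) : Prop :=
  ∀ ω ∈ f.supp, ∀ i j : Fin n, ω i ≠ 0 → ω j ≠ 0 → i = j

end TropPoly


section AuxiliaryLemmas


lemma helper_small {X : Type*} (s : Finset X) (a b : X → ℝ)
    (ha : ∀ x ∈ s, a x < 0) :
    ∃ t : ℝ, 0 < t ∧ ∀ x ∈ s, a x + t * b x < 0 := by
  classical
  by_cases hne : (s.filter (fun x => 0 < b x)).Nonempty
  · set s' := s.filter (fun x => 0 < b x) with hs'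
    set T := s'.image (fun x => -a x / (2 * b x)) with hT
    have hTne : T.Nonempty := hne.image _
    have ht : 0 < T.min' hTne := by
      obtain ⟨x₁, hx₁, hmin⟩ := Finset.mem_image.mp (T.min'_mem hTne)
      have hbx : 0 < b x₁ := (Finset.mem_filter.mp hx₁).2
      have hax : a x₁ < 0 := ha x₁ (Finset.mem_filter.mp hx₁).1
      rw [← hmin]
      exact div_pos (by linarith) (by linarith)
    refine ⟨T.min' hTne, ht, ?_⟩
    intro x hx
    by_cases hbx : 0 < b x
    · have hxs' : x ∈ s' := Finset.mem_filter.mpr ⟨hx, hbx⟩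
      have hle : T.min' hTne ≤ -a x / (2 * b x) :=
        Finset.min'_le _ _ (Finset.mem_image_of_mem _ hxs')
      rw [le_div_iff₀ (by linarith)] at hle
      nlinarith [ha x hx]
    · push_neg at hbx
      nlinarith [ha x hx]
  · refine ⟨1, one_pos, fun x hx => ?_⟩
    have hbx : ¬ (0 < b x) := fun h => hne ⟨x, Finset.mem_filter.mpr ⟨hx, h⟩⟩
    push_neg at hbx
    nlinarith [ha x hx]

lemma helper_first {X : Type*} (s : Finset X) (a b : X → ℝ)
    (ha : ∀ x ∈ s, a x < 0) {x₀ : X} (hx₀ : x₀ ∈ s) (hb₀ : 0 < b x₀) :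
    ∃ t : ℝ, 0 < t ∧ (∀ x ∈ s, a x + t * b x ≤ 0) ∧ ∃ x ∈ s, a x + t * b x = 0 := by
  classical
  set s' := s.filter (fun x => 0 < b x) with hs'
  have hne : s'.Nonempty := ⟨x₀, Finset.mem_filter.mpr ⟨hx₀, hb₀⟩⟩
  set T := s'.image (fun x => -a x / b x) with hT
  have hTne : T.Nonempty := hne.image _
  obtain ⟨x₁, hx₁, hmin⟩ := Finset.mem_image.mp (T.min'_mem hTne)
  have hbx₁ : 0 < b x₁ := (Finset.mem_filter.mp hx₁).2
  have hax₁ : a x₁ < 0 := ha x₁ (Finset.mem_filter.mp hx₁).1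
  have ht : 0 < T.min' hTne := by
    rw [← hmin]; exact div_pos (by linarith) hbx₁
  refine ⟨T.min' hTne, ht, fun x hx => ?_, x₁, (Finset.mem_filter.mp hx₁).1, ?_⟩
  · by_cases hbx : 0 < b x
    · have hle : T.min' hTne ≤ -a x / b x :=
        Finset.min'_le _ _ (Finset.mem_image_of_mem _ (Finset.mem_filter.mpr ⟨hx, hbx⟩))
      rw [le_div_iff₀ hbx] at hle
      nlinarith
    · push_neg at hbx
      nlinarith [ha x hx]
  · rw [← hmin]
    field_simp
    ring

namespace TropPoly

variable {n : ℕ}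


lemma mono_le_eval (f : TropPoly n) {ω : Fin n → ℕ} (hω : ω ∈ f.supp) (u : Fin n → ℝ) :
    f.mono ω u ≤ f.eval u :=
  Finset.le_sup' (fun ω => f.mono ω u) hω

lemma exists_eval_eq (f : TropPoly n) (u : Fin n → ℝ) :
    ∃ ω ∈ f.supp, f.mono ω u = f.eval u := by
  obtain ⟨ω, hω, h⟩ := Finset.exists_mem_eq_sup' f.supp_nonempty (fun ω => f.mono ω u)
  exact ⟨ω, hω, h.symm⟩

lemma eval_le (f : TropPoly n) {u : Fin n → ℝ} {c : ℝ}
    (h : ∀ σ ∈ f.supp, f.mono σ u ≤ c) : f.eval u ≤ c :=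
  Finset.sup'_le _ _ h

/-- `mono` along the line `u + t • d`. -/
lemma mono_line (f : TropPoly n) (σ : Fin n → ℕ) (u d : Fin n → ℝ) (t : ℝ) :
    f.mono σ (fun k => u k + t * d k)
      = f.mono σ u + t * ∑ k, (σ k : ℝ) * d k := by
  unfold mono
  rw [Finset.mul_sum]
  have : ∀ k : Fin n, (σ k : ℝ) * (u k + t * d k)
      = (σ k : ℝ) * u k + t * ((σ k : ℝ) * d k) := fun k => by ring
  simp only [this]
  rw [Finset.sum_add_distrib]
  ring

/-- A point where `ω` strictly dominates evaluates to `mono ω`. -/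
lemma eval_eq_of_dom (f : TropPoly n) {ω : Fin n → ℕ} (hω : ω ∈ f.supp) {u : Fin n → ℝ}
    (hu : ∀ σ ∈ f.supp, σ ≠ ω → f.mono σ u < f.mono ω u) :
    f.eval u = f.mono ω u := by
  refine le_antisymm (f.eval_le fun σ hσ => ?_) (f.mono_le_eval hω u)
  rcases eq_or_ne σ ω with rfl | hne
  · exact le_rfl
  · exact (hu σ hσ hne).le

/-- A strictly-dominated point is not in the corner locus. -/
lemma not_mem_Z_of_dom (f : TropPoly n) {ω : Fin n → ℕ} (hω : ω ∈ f.supp) {u : Fin n → ℝ}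
    (hu : ∀ σ ∈ f.supp, σ ≠ ω → f.mono σ u < f.mono ω u) :
    u ∉ f.Z := by
  rintro ⟨α, hα, β, hβ, hne, h1, h2⟩
  have heval := f.eval_eq_of_dom hω hu
  rcases eq_or_ne α ω with rfl | hαω
  · have := hu β hβ (by rintro rfl; exact hne rfl)
    rw [h2, heval] at this
    exact lt_irrefl _ this
  · have := hu α hα hαω
    rw [h1, heval] at this
    exact lt_irrefl _ this



lemma crossing (f : TropPoly n) {ω : Fin n → ℕ} (hω : ω ∈ f.supp) {u : Fin n → ℝ}
    (hu : ∀ σ ∈ f.supp, σ ≠ ω → f.mono σ u < f.mono ω u)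
    {i : Fin n} {σs : Fin n → ℕ} (hσs : σs ∈ f.supp) (hlt : σs i < ω i) :
    ∃ t : ℝ, 0 < t ∧ (fun k => u k + t * (if k = i then (-1:ℝ) else 0)) ∈ f.Z := by
  classical
  set d : Fin n → ℝ := fun k => if k = i then (-1:ℝ) else 0 with hd
  have hdot : ∀ σ : Fin n → ℕ, ∑ k, (σ k : ℝ) * d k = -(σ i : ℝ) := by
    intro σ
    rw [hd]
    rw [show (fun k : Fin n => (σ k : ℝ) * (if k = i then (-1:ℝ) else 0))
        = (fun k : Fin n => (if k = i then -(σ k : ℝ) else 0)) from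
      funext fun k => by split <;> ring]
    simp
  -- the set of competitors
  set s : Finset (Fin n → ℕ) := f.supp.filter (fun σ => σ ≠ ω) with hs
  have hσs' : σs ∈ s := Finset.mem_filter.mpr ⟨hσs, fun h => by
    subst h; exact lt_irrefl _ hlt⟩
  obtain ⟨t, ht, hall, x₁, hx₁, hx₁eq⟩ :=
    helper_first s (fun σ => f.mono σ u - f.mono ω u)
      (fun σ => (ω i : ℝ) - (σ i : ℝ))
      (fun σ hσ => sub_neg.mpr (hu σ (Finset.mem_filter.mp hσ).1 (Finset.mem_filter.mp hσ).2))
      hσs' (by rw [sub_pos]; exact_mod_cast hlt)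
  refine ⟨t, ht, ?_⟩
  set p : Fin n → ℝ := fun k => u k + t * d k with hp
  have hmono : ∀ σ : Fin n → ℕ, f.mono σ p = f.mono σ u - t * (σ i : ℝ) := by
    intro σ
    rw [hp, f.mono_line σ u d t, hdot σ]
    ring
  have hdiff : ∀ σ : Fin n → ℕ,
      f.mono σ p - f.mono ω p
        = (f.mono σ u - f.mono ω u) + t * ((ω i : ℝ) - (σ i : ℝ)) := by
    intro σ; rw [hmono σ, hmono ω]; ring
  have htop : f.eval p = f.mono ω p := by
    refine le_antisymm (f.eval_le fun σ hσ => ?_) (f.mono_le_eval hω p)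
    rcases eq_or_ne σ ω with rfl | hne
    · exact le_rfl
    · have := hall σ (Finset.mem_filter.mpr ⟨hσ, hne⟩)
      have h2 := hdiff σ
      linarith
  have hx₁supp : x₁ ∈ f.supp := (Finset.mem_filter.mp hx₁).1
  have hx₁ne : x₁ ≠ ω := (Finset.mem_filter.mp hx₁).2
  have hx₁top : f.mono x₁ p = f.mono ω p := by
    have h2 := hdiff x₁
    linarith
  exact ⟨ω, hω, x₁, hx₁supp, fun h => hx₁ne h.symm, htop.symm, by rw [hx₁top, htop]⟩



/-- A monomial is exposed if it strictly dominates at some point. -/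
def Exposed (f : TropPoly n) (ω : Fin n → ℕ) : Prop :=
  ∃ u : Fin n → ℝ, ∀ σ ∈ f.supp, σ ≠ ω → f.mono σ u < f.mono ω u

/-- If `ω` ties at the top with exactly one other monomial, it is exposed. -/
lemma exposed_of_pair (f : TropPoly n) {ω α : Fin n → ℕ} (hα : α ∈ f.supp)
    (hne : α ≠ ω) {u : Fin n → ℝ}
    (hαtop : f.mono α u = f.eval u) (hωtop : f.mono ω u = f.eval u)
    (hno3 : ∀ γ ∈ f.supp, γ ≠ ω → γ ≠ α → f.mono γ u < f.eval u) :
    f.Exposed ω := by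
  classical
  set d : Fin n → ℝ := fun k => (ω k : ℝ) - (α k : ℝ) with hd
  set s : Finset (Fin n → ℕ) := f.supp.filter (fun γ => γ ≠ ω ∧ γ ≠ α) with hs
  obtain ⟨t, ht, hall⟩ := helper_small s
    (fun σ => f.mono σ u - f.mono ω u)
    (fun σ => (∑ k, (σ k : ℝ) * d k) - (∑ k, (ω k : ℝ) * d k))
    (fun σ hσ => by
      have hm := Finset.mem_filter.mp hσ
      have := hno3 σ hm.1 hm.2.1 hm.2.2
      rw [← hωtop] at this
      show f.mono σ u - f.mono ω u < 0
      linarith)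
  refine ⟨fun k => u k + t * d k, fun σ hσ hσω => ?_⟩
  rcases eq_or_ne σ α with rfl | hσα
  · -- the partner: separates at positive speed
    rw [f.mono_line σ u d t, f.mono_line ω u d t]
    have hpos : 0 < (∑ k, (ω k : ℝ) * d k) - (∑ k, (σ k : ℝ) * d k) := by
      have : (∑ k, (ω k : ℝ) * d k) - (∑ k, (σ k : ℝ) * d k) = ∑ k, d k ^ 2 := by
        rw [← Finset.sum_sub_distrib]
        refine Finset.sum_congr rfl fun k _ => ?_
        rw [hd]; ring
      rw [this]
      have hex : ∃ k, σ k ≠ ω k := by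
        by_contra h
        push_neg at h
        exact hne (funext h)
      obtain ⟨k, hk⟩ := hex
      refine Finset.sum_pos' (fun k _ => sq_nonneg _) ⟨k, Finset.mem_univ k, ?_⟩
      have : d k ≠ 0 := by
        rw [hd]
        simp only [sub_ne_zero]
        exact fun h => hk (by exact_mod_cast h.symm)
      positivity
    have : f.mono σ u = f.mono ω u := by rw [hαtop, hωtop]
    nlinarith
  · have hmem : σ ∈ s := Finset.mem_filter.mpr ⟨hσ, hσω, hσα⟩
    have := hall σ hmem
    rw [f.mono_line σ u d t, f.mono_line ω u d t]
    linarith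

/-- Removing a non-exposed monomial changes neither `eval` nor `Z`. -/
lemma erase_eval_Z (f : TropPoly n) {ω : Fin n → ℕ} (hω : ω ∈ f.supp)
    (hnexp : ¬ f.Exposed ω) (hne : (f.supp.erase ω).Nonempty) :
    (TropPoly.mk (f.supp.erase ω) hne f.coeff).eval = f.eval ∧
    (TropPoly.mk (f.supp.erase ω) hne f.coeff).Z = f.Z := by
  classical
  set f₁ : TropPoly n := TropPoly.mk (f.supp.erase ω) hne f.coeff with hf₁
  have hmono : ∀ σ u, f₁.mono σ u = f.mono σ u := fun σ u => rfl
  have heval : f₁.eval = f.eval := by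
    funext u
    refine le_antisymm (f₁.eval_le fun σ hσ => f.mono_le_eval (Finset.mem_of_mem_erase hσ) u) ?_
    obtain ⟨σ, hσ, hσtop⟩ := f.exists_eval_eq u
    rcases eq_or_ne σ ω with rfl | hσω
    · -- ω is at the top; some other monomial must also be at the top
      by_contra hlt
      push_neg at hlt
      apply hnexp
      refine ⟨u, fun γ hγ hγω => ?_⟩
      have hγ1 : γ ∈ f₁.supp := Finset.mem_erase.mpr ⟨hγω, hγ⟩
      have h1 : f.mono γ u ≤ f₁.eval u := f₁.mono_le_eval hγ1 u
      have h2 : f.mono γ u < f.eval u := lt_of_le_of_lt h1 hlt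
      rw [hσtop]
      exact h2
    · rw [← hσtop]
      exact f₁.mono_le_eval (Finset.mem_erase.mpr ⟨hσω, hσ⟩) u
  constructor
  · exact heval
  ext u
  constructor
  · rintro ⟨α, hα, β, hβ, hαβ, h1, h2⟩
    exact ⟨α, Finset.mem_of_mem_erase hα, β, Finset.mem_of_mem_erase hβ, hαβ,
      by rw [← heval]; exact h1, by rw [← heval]; exact h2⟩
  · rintro ⟨α, hα, β, hβ, hαβ, h1, h2⟩
    -- find two top monomials distinct from ω
    have key : ∀ γ δ : Fin n → ℕ, γ ∈ f.supp → δ ∈ f.supp → γ ≠ δ → δ = ω →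
        f.mono γ u = f.eval u → f.mono δ u = f.eval u → u ∈ f₁.Z := by
      intro γ δ hγ hδ hγδ hδω hγtop hδtop
      subst hδω
      by_cases h3 : ∃ ρ ∈ f.supp, ρ ≠ δ ∧ ρ ≠ γ ∧ f.mono ρ u = f.eval u
      · obtain ⟨ρ, hρ, hρδ, hργ, hρtop⟩ := h3
        refine ⟨γ, Finset.mem_erase.mpr ⟨fun h => hγδ h, hγ⟩,
          ρ, Finset.mem_erase.mpr ⟨hρδ, hρ⟩, fun h => hργ h.symm, ?_, ?_⟩
        · rw [hmono, heval]; exact hγtop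
        · rw [hmono, heval]; exact hρtop
      · exfalso
        apply hnexp
        push_neg at h3
        refine f.exposed_of_pair hγ hγδ hγtop hδtop fun ρ hρ hρδ hργ => ?_
        rcases lt_or_eq_of_le (f.mono_le_eval hρ u) with h | h
        · exact h
        · exact absurd h (h3 ρ hρ hρδ hργ)
    rcases eq_or_ne β ω with rfl | hβω
    · exact key α β hα hβ hαβ rfl h1 h2
    rcases eq_or_ne α ω with rfl | hαω
    · exact key β α hβ hα (fun h => hαβ h.symm) rfl h2 h1
    · exact ⟨α, Finset.mem_erase.mpr ⟨hαω, hα⟩, β, Finset.mem_erase.mpr ⟨hβω, hβ⟩, hαβ,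
        by rw [hmono, heval]; exact h1, by rw [hmono, heval]; exact h2⟩

/-- Every tropical polynomial can be pruned so that all monomials are exposed,
without changing the corner locus. -/
lemma exists_pruned (f : TropPoly n) :
    ∃ f' : TropPoly n, (∀ ω ∈ f'.supp, f'.Exposed ω) ∧ f'.Z = f.Z := by
  classical
  obtain ⟨N, hN⟩ : ∃ N, f.supp.card ≤ N := ⟨f.supp.card, le_rfl⟩
  induction N generalizing f with
  | zero =>
    exact absurd (Finset.card_pos.mpr f.supp_nonempty) (by omega)
  | succ N ih =>
    by_cases hall : ∀ ω ∈ f.supp, f.Exposed ω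
    · exact ⟨f, hall, rfl⟩
    · push_neg at hall
      obtain ⟨ω, hω, hnexp⟩ := hall
      have hne : (f.supp.erase ω).Nonempty := by
        rcases (f.supp.erase ω).eq_empty_or_nonempty with h | h
        · exfalso
          apply hnexp
          refine ⟨0, fun σ hσ hσω => ?_⟩
          exact absurd (Finset.mem_erase.mpr ⟨hσω, hσ⟩) (by rw [h]; simp)
        · exact h
      obtain ⟨heval, hZ⟩ := f.erase_eval_Z hω hnexp hne
      obtain ⟨f', h1, h2⟩ := ih (TropPoly.mk (f.supp.erase ω) hne f.coeff)
        (by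
          have := Finset.card_erase_of_mem hω
          simp only [this]
          omega)
      exact ⟨f', h1, h2.trans hZ⟩



/-- Monomials with at most one nonzero exponent commute with coordinatewise max. -/
lemma mono_sup {f : TropPoly n} {ω : Fin n → ℕ}
    (hω : ∀ i j : Fin n, ω i ≠ 0 → ω j ≠ 0 → i = j) (u v : Fin n → ℝ) :
    f.mono ω (u ⊔ v) = max (f.mono ω u) (f.mono ω v) := by
  classical
  have hsup : ∀ k, (u ⊔ v) k = max (u k) (v k) := fun k => rfl
  by_cases h0 : ∀ k, ω k = 0
  · unfold mono
    have : ∀ w : Fin n → ℝ, ∑ k, (ω k : ℝ) * w k = 0 := by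
      intro w
      refine Finset.sum_eq_zero fun k _ => by rw [h0 k]; simp
    rw [this, this, this, max_self]
  · push_neg at h0
    obtain ⟨i₀, hi₀⟩ := h0
    have hz : ∀ k, k ≠ i₀ → ω k = 0 := by
      intro k hk
      by_contra hkk
      exact hk (hω k i₀ hkk hi₀)
    have hsum : ∀ w : Fin n → ℝ, ∑ k, (ω k : ℝ) * w k = (ω i₀ : ℝ) * w i₀ := by
      intro w
      refine Finset.sum_eq_single i₀ (fun k _ hk => by rw [hz k hk]; simp) (by simp)
    unfold mono
    rw [hsum, hsum, hsum, hsup]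
    rw [mul_max_of_nonneg _ _ (by positivity : (0:ℝ) ≤ (ω i₀ : ℝ))]
    rw [max_add_add_right]

/-- The corner locus of a simple tropical polynomial is closed under `⊔`. -/
lemma simple_additive (g : TropPoly n) (hg : g.Simple) :
    ∀ u v : Fin n → ℝ, u ∈ g.Z → v ∈ g.Z → u ⊔ v ∈ g.Z := by
  have aux : ∀ u v : Fin n → ℝ, g.eval v ≤ g.eval u → u ∈ g.Z → u ⊔ v ∈ g.Z := by
    rintro u v hle ⟨ω, hω, τ, hτ, hne, h1, h2⟩
    have hevaluv : g.eval (u ⊔ v) = g.eval u := by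
      refine le_antisymm (g.eval_le fun σ hσ => ?_) ?_
      · rw [mono_sup (hg σ hσ)]
        exact max_le (g.mono_le_eval hσ u) ((g.mono_le_eval hσ v).trans hle)
      · have h3 := g.mono_le_eval hω (u ⊔ v)
        rw [mono_sup (hg ω hω)] at h3
        calc g.eval u = g.mono ω u := h1.symm
          _ ≤ max (g.mono ω u) (g.mono ω v) := le_max_left _ _
          _ ≤ g.eval (u ⊔ v) := h3
    have htop : ∀ σ : Fin n → ℕ, σ ∈ g.supp → g.mono σ u = g.eval u →
        g.mono σ (u ⊔ v) = g.eval (u ⊔ v) := by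
      intro σ hσ hσtop
      rw [mono_sup (hg σ hσ), hevaluv, ← hσtop]
      exact max_eq_left ((g.mono_le_eval hσ v).trans (hle.trans (le_of_eq hσtop.symm)))
    exact ⟨ω, hω, τ, hτ, hne, htop ω hω h1, htop τ hτ h2⟩
  intro u v hu hv
  rcases le_total (g.eval v) (g.eval u) with hle | hle
  · exact aux u v hle hu
  · rw [sup_comm]
    exact aux v u hle hv



lemma forward (f : TropPoly n)
    (hadd : ∀ u v : Fin n → ℝ, u ∈ f.Z → v ∈ f.Z → u ⊔ v ∈ f.Z) :
    ∃ g : TropPoly n, g.Simple ∧ g.Z = f.Z := by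
  classical
  obtain ⟨f', hexp, hZ⟩ := f.exists_pruned
  set m : Fin n → ℕ := fun i => (f'.supp.image (fun σ => σ i)).min' (f'.supp_nonempty.image _)
    with hm
  have hm_le : ∀ σ ∈ f'.supp, ∀ i, m i ≤ σ i := fun σ hσ i =>
    Finset.min'_le _ _ (Finset.mem_image_of_mem _ hσ)
  have hm_mem : ∀ i, ∃ σ ∈ f'.supp, σ i = m i := by
    intro i
    have h := Finset.min'_mem (f'.supp.image (fun σ => σ i)) (f'.supp_nonempty.image _)
    obtain ⟨σ, hσ, hσi⟩ := Finset.mem_image.mp h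
    exact ⟨σ, hσ, hσi⟩
  -- Key step: every exposed monomial exceeds the minimum in at most one coordinate.
  have key : ∀ ω ∈ f'.supp, ∀ i j : Fin n, m i < ω i → m j < ω j → i = j := by
    intro ω hω i j hi hj
    by_contra hij
    obtain ⟨u, hu⟩ := hexp ω hω
    obtain ⟨σi, hσi, hσii⟩ := hm_mem i
    obtain ⟨σj, hσj, hσjj⟩ := hm_mem j
    obtain ⟨t₁, ht₁, hp⟩ := f'.crossing hω hu hσi (by rw [hσii]; exact hi)
    obtain ⟨t₂, ht₂, hq⟩ := f'.crossing hω hu hσj (by rw [hσjj]; exact hj)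
    set p : Fin n → ℝ := fun k => u k + t₁ * (if k = i then (-1:ℝ) else 0) with hpdef
    set q : Fin n → ℝ := fun k => u k + t₂ * (if k = j then (-1:ℝ) else 0) with hqdef
    have hsup : p ⊔ q = u := by
      funext k
      show max (p k) (q k) = u k
      simp only [hpdef, hqdef]
      rcases eq_or_ne k i with rfl | hki
      · rw [if_pos rfl, if_neg hij]
        simp only [mul_zero, add_zero, mul_neg_one, mul_neg, mul_one]
        exact max_eq_right (by linarith)
      rcases eq_or_ne k j with rfl | hkj
      · rw [if_neg hki, if_pos rfl]
        simp only [mul_zero, add_zero, mul_neg, mul_one]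
        exact max_eq_left (by linarith)
      · rw [if_neg hki, if_neg hkj]
        simp
    have huZ : u ∈ f'.Z := by
      rw [hZ, ← hsup]
      exact hadd p q (hZ ▸ hp) (hZ ▸ hq)
    exact f'.not_mem_Z_of_dom hω hu huZ
  -- Construct the simple polynomial by shifting exponents down by `m`.
  set msub : (Fin n → ℕ) → (Fin n → ℕ) := fun σ k => σ k - m k with hmsub
  set L : (Fin n → ℝ) → ℝ := fun u => ∑ k, (m k : ℝ) * u k with hL
  set g : TropPoly n := TropPoly.mk (f'.supp.image msub) (f'.supp_nonempty.image _)
    (fun τ => f'.coeff (fun k => τ k + m k)) with hg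
  have hcoeff : ∀ σ ∈ f'.supp, g.coeff (msub σ) = f'.coeff σ := by
    intro σ hσ
    show f'.coeff (fun k => (σ k - m k) + m k) = f'.coeff σ
    congr 1
    funext k
    exact Nat.sub_add_cancel (hm_le σ hσ k)
  have hmonoeq : ∀ σ ∈ f'.supp, ∀ u : Fin n → ℝ,
      g.mono (msub σ) u = f'.mono σ u - L u := by
    intro σ hσ u
    unfold mono
    rw [hcoeff σ hσ]
    have : ∀ k : Fin n, ((msub σ k : ℕ) : ℝ) * u k = (σ k : ℝ) * u k - (m k : ℝ) * u k := by
      intro k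
      show (((σ k - m k : ℕ) : ℝ)) * u k = _
      rw [Nat.cast_sub (hm_le σ hσ k)]
      ring
    simp only [this]
    rw [Finset.sum_sub_distrib]
    rw [hL]
    ring
  have hinj : ∀ σ ∈ f'.supp, ∀ ρ ∈ f'.supp, msub σ = msub ρ → σ = ρ := by
    intro σ hσ ρ hρ h
    funext k
    have h1 := congrFun h k
    have h2 := hm_le σ hσ k
    have h3 := hm_le ρ hρ k
    simp only [hmsub] at h1
    omega
  have heval : ∀ u : Fin n → ℝ, g.eval u = f'.eval u - L u := by
    intro u
    refine le_antisymm (g.eval_le fun τ hτ => ?_) ?_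
    · obtain ⟨σ, hσ, rfl⟩ := Finset.mem_image.mp hτ
      rw [hmonoeq σ hσ]
      have := f'.mono_le_eval hσ u
      linarith
    · obtain ⟨σ, hσ, hσtop⟩ := f'.exists_eval_eq u
      have h1 : g.mono (msub σ) u ≤ g.eval u :=
        g.mono_le_eval (Finset.mem_image_of_mem _ hσ) u
      rw [hmonoeq σ hσ, hσtop] at h1
      exact h1
  refine ⟨g, ?_, ?_⟩
  · -- g is simple
    intro ω' hω' i j hi hj
    obtain ⟨σ, hσ, rfl⟩ := Finset.mem_image.mp hω'
    have hi' : m i < σ i := by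
      simp only [hmsub] at hi
      omega
    have hj' : m j < σ j := by
      simp only [hmsub] at hj
      omega
    exact key σ hσ i j hi' hj'
  · -- Z g = Z f
    rw [← hZ]
    ext u
    constructor
    · rintro ⟨ω', hω', τ', hτ', hne, h1, h2⟩
      obtain ⟨σ, hσ, rfl⟩ := Finset.mem_image.mp hω'
      obtain ⟨ρ, hρ, rfl⟩ := Finset.mem_image.mp hτ'
      rw [hmonoeq σ hσ, heval] at h1
      rw [hmonoeq ρ hρ, heval] at h2
      exact ⟨σ, hσ, ρ, hρ, fun h => hne (by rw [h]), by linarith, by linarith⟩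
    · rintro ⟨σ, hσ, ρ, hρ, hne, h1, h2⟩
      refine ⟨msub σ, Finset.mem_image_of_mem _ hσ, msub ρ, Finset.mem_image_of_mem _ hρ,
        fun h => hne (hinj σ hσ ρ hρ h), ?_, ?_⟩
      · rw [hmonoeq σ hσ, heval]; linarith
      · rw [hmonoeq ρ hρ, heval]; linarith


end TropPoly

end AuxiliaryLemmas

/-- The corner locus of a tropical polynomial is closed under coordinatewise
maximum if and only if it is the corner locus of some simple tropical polynomial. -/
theorem TropPoly.Z_additive_iff_exists_simple {n : ℕ} (f : TropPoly n) :
    (∀ u v : Fin n → ℝ, u ∈ f.Z → v ∈ f.Z → u ⊔ v ∈ f.Z) ↔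
    ∃ g : TropPoly n, g.Simple ∧ g.Z = f.Z := by
  constructor
  · exact f.forward
  · rintro ⟨g, hg, hZg⟩ u v hu hv
    rw [← hZg] at hu hv ⊢
    exact g.simple_additive hg u v hu hv
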